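/- For every even integer λ ≥ 4, there is no positive integer θ such that θ²(λ+1) + 2θ = λ² + λ − 1. -/
import Mathlib


theorem stmt6 (l : ℕ) (hl : 4 ≤ l) (he : Even l) :
    ¬ ∃ θ : ℕ, 0 < θ ∧ θ ^ 2 * (l + 1) + 2 * θ = l ^ 2 + l - 1 := by
  rintro ⟨θ, hθ, heq⟩
  have h1 : 1 ≤ l ^ 2 + l := by nlinarith
  have heq' : θ ^ 2 * (l + 1) + 2 * θ + 1 = l ^ 2 + l := by omega
  have hlt : θ ^ 2 < l := by nlinarith
  obtain ⟨k, hk⟩ : ∃ k, l = θ ^ 2 + k := ⟨l - θ ^ 2, by omega⟩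
  have hk1 : 1 ≤ k := by omega
  have hkey : 2 * θ + 1 = k * (l + 1) := by nlinarith
  have h2 : l ≤ 2 * θ := by nlinarith
  nlinarith [sq_nonneg (2 * θ - l)]
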